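/- arXiv:1806.03936 — 5 statements merged into one kernel-verified Lean document; each statement's English description precedes it below -/
import Mathlib

section
/- Let G be a simple undirected graph with adjacency matrix A and let S be a summary of G determined by a partition {V_1,...,V_k} of V in which every part V_i with at least one internal edge satisfies |V_i| ≥ 2. Then the l1-reconstruction error satisfies the closed form RE(G|S) = Σ_{i=1}^{k} (4·e_i − 4·e_i² / C(n_i,2)) + Σ_{i=1}^{k} Σ_{j≠i} (2·e_{ij} − 2·e_{ij}² / (n_i·n_j)). -/
/-!
Setting: `A : V → V → ℝ` is the (symmetric, 0/1-valued, zero-diagonal) adjacency matrix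
of a finite simple undirected graph `G = (V,E)`, and `P : V → Fin k` assigns each vertex
to its block of the partition `{V_1, …, V_k}`.
-/

open Finset

/-- `n_i`: the number of vertices in block `i`. -/
def blockCard {V : Type*} [Fintype V] {k : ℕ} (P : V → Fin k) (i : Fin k) : ℕ :=
  (Finset.univ.filter fun v => P v = i).card

/-- `e_i`: the number of edges of `G` with both endpoints in block `i`
(for a symmetric 0/1 matrix with zero diagonal, each such edge is counted twice in the
double sum, whence the division by `2`). -/
noncomputable def eIn {V : Type*} [Fintype V] {k : ℕ} (A : V → V → ℝ) (P : V → Fin k) (i : Fin k) : ℝ :=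
  (∑ u ∈ Finset.univ.filter (fun v => P v = i),
      ∑ v ∈ Finset.univ.filter (fun v => P v = i), A u v) / 2

/-- `e_{ij}`: the number of edges of `G` with one endpoint in block `i` and the other in
block `j` (for `i ≠ j`). -/
noncomputable def eCross {V : Type*} [Fintype V] {k : ℕ} (A : V → V → ℝ) (P : V → Fin k)
    (i j : Fin k) : ℝ :=
  ∑ u ∈ Finset.univ.filter (fun v => P v = i),
    ∑ v ∈ Finset.univ.filter (fun v => P v = j), A u v

/-- The expected adjacency matrix `Ā` of the summary determined by `P`. -/
noncomputable def Abar {V : Type*} [Fintype V] [DecidableEq V] {k : ℕ}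
    (A : V → V → ℝ) (P : V → Fin k) (u v : V) : ℝ :=
  if u = v then 0
  else if P u = P v then eIn A P (P u) / ((blockCard P (P u)).choose 2 : ℝ)
  else eCross A P (P u) (P v) / ((blockCard P (P u) : ℝ) * (blockCard P (P v) : ℝ))

/-- The `l₁`-reconstruction error `RE(G|S) = Σ_u Σ_v |Ā(u,v) − A(u,v)|`. -/
noncomputable def RE {V : Type*} [Fintype V] [DecidableEq V] {k : ℕ}
    (A : V → V → ℝ) (P : V → Fin k) : ℝ :=
  ∑ u : V, ∑ v : V, |Abar A P u v - A u v|

/-!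
Off the diagonal, `Ā` is constant on each block of pairs `V_i × V_j` and equals the mean of
the 0/1 entries of `A` there (the diagonal of both matrices vanishes). For 0/1 data `x` with
mean `c ∈ [0,1]` one has `|c - x| = c + x - 2cx`, so the `l₁` deviation from the mean over a set
of `N` pairs with `S` ones is `2S - 2S²/N`. Summing over blocks gives the formula: a diagonal
block has `S = 2e_i`, `N = 2·C(n_i,2)`, an off-diagonal one `S = e_{ij}`, `N = n_i n_j`.
-/

lemma abs_sub_eq_of_eq_zero_or_eq_one {c x : ℝ} (hx : x = 0 ∨ x = 1) (hc₀ : 0 ≤ c)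
    (hc₁ : c ≤ 1) : |c - x| = c + x - 2 * c * x := by
  rcases hx with rfl | rfl
  · rw [sub_zero, abs_of_nonneg hc₀]; ring
  · rw [abs_of_nonpos (by linarith)]; ring

lemma sum_abs_mean_sub_of_eq_zero_or_eq_one {ι : Type*} (s : Finset ι) (x : ι → ℝ)
    (hx : ∀ i ∈ s, x i = 0 ∨ x i = 1) :
    ∑ i ∈ s, |(∑ j ∈ s, x j) / #s - x i|
      = 2 * ∑ i ∈ s, x i - 2 * (∑ i ∈ s, x i) ^ 2 / #s := by
  rcases s.eq_empty_or_nonempty with rfl | hs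
  · simp
  set S := ∑ i ∈ s, x i
  have hN : (0 : ℝ) < #s := by exact_mod_cast hs.card_pos
  have hS₀ : 0 ≤ S := sum_nonneg fun i hi => by rcases hx i hi with h | h <;> simp [h]
  have hS₁ : S ≤ #s := by
    simpa using sum_le_sum fun i hi => (show x i ≤ 1 by rcases hx i hi with h | h <;> simp [h])
  rw [sum_congr rfl fun i hi => abs_sub_eq_of_eq_zero_or_eq_one (hx i hi)
    (div_nonneg hS₀ hN.le) ((div_le_one hN).2 hS₁)]
  simp only [sum_sub_distrib, sum_add_distrib, sum_const, nsmul_eq_mul, ← mul_sum]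
  field_simp
  ring

section Blocks

variable {V : Type*} [Fintype V] {k : ℕ}

def block (P : V → Fin k) (i : Fin k) : Finset V := univ.filter fun v => P v = i

def blockPairs [DecidableEq V] (P : V → Fin k) (i j : Fin k) : Finset (V × V) :=
  (block P i ×ˢ block P j).filter fun p => p.1 ≠ p.2

variable [DecidableEq V] (P : V → Fin k)

lemma sum_blockPairs {M : Type*} [AddCommMonoid M] (f : V → V → M) (hf : ∀ u, f u u = 0) (i j : Fin k) :
    ∑ p ∈ blockPairs P i j, f p.1 p.2 = ∑ u ∈ block P i, ∑ v ∈ block P j, f u v := by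
  rw [blockPairs, sum_filter_of_ne (p := fun p : V × V => p.1 ≠ p.2)
    fun p _ h hp => h (by rw [hp, hf]), sum_product]

lemma blockPairs_self (i : Fin k) : blockPairs P i i = (block P i).offDiag := by
  ext
  simp [blockPairs, and_assoc]

lemma card_blockPairs_self (i : Fin k) :
    (#(blockPairs P i i) : ℝ) = 2 * ((blockCard P i).choose 2 : ℝ) := by
  rw [blockPairs_self, offDiag_card, Nat.cast_sub (Nat.le_mul_self _), Nat.cast_choose_two]
  push_cast [blockCard, block]
  ring

lemma card_blockPairs_of_ne {i j : Fin k} (hij : i ≠ j) :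
    #(blockPairs P i j) = blockCard P i * blockCard P j := by
  rw [blockPairs, filter_true_of_mem, card_product]
  · rfl
  · intro p hp
    simp only [block, mem_product, mem_filter, mem_univ, true_and] at hp
    exact fun h => hij (by rw [← hp.1, ← hp.2, h])

variable {A : V → V → ℝ}

lemma sum_blockPairs_eq_eCross (hdiag : ∀ u, A u u = 0) (i j : Fin k) :
    ∑ p ∈ blockPairs P i j, A p.1 p.2 = eCross A P i j :=
  sum_blockPairs P A hdiag i j

lemma sum_blockPairs_self (hdiag : ∀ u, A u u = 0) (i : Fin k) :
    ∑ p ∈ blockPairs P i i, A p.1 p.2 = 2 * eIn A P i := by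
  rw [sum_blockPairs P A hdiag, eIn, block]
  ring

lemma Abar_eq_mean_of_mem_blockPairs (hdiag : ∀ u, A u u = 0) {i j : Fin k} {p : V × V}
    (hp : p ∈ blockPairs P i j) :
    Abar A P p.1 p.2 = (∑ q ∈ blockPairs P i j, A q.1 q.2) / #(blockPairs P i j) := by
  simp only [blockPairs, block, mem_filter, mem_product, mem_univ, true_and] at hp
  obtain ⟨⟨rfl, rfl⟩, hne⟩ := hp
  by_cases hij : P p.1 = P p.2
  · rw [Abar, if_neg hne, if_pos hij, ← hij, sum_blockPairs_self P hdiag, card_blockPairs_self,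
      mul_div_mul_left _ _ two_ne_zero]
  · rw [Abar, if_neg hne, if_neg hij, sum_blockPairs_eq_eCross P hdiag,
      card_blockPairs_of_ne P hij, Nat.cast_mul]

lemma RE_eq_sum_blockPairs (hdiag : ∀ u, A u u = 0) :
    RE A P = ∑ i, ∑ j, ∑ p ∈ blockPairs P i j, |Abar A P p.1 p.2 - A p.1 p.2| := by
  have hzero : ∀ u, |Abar A P u u - A u u| = 0 := fun u => by simp [Abar, hdiag]
  simp only [sum_blockPairs P (fun u v => |Abar A P u v - A u v|) hzero]
  unfold RE
  rw [← sum_fiberwise univ P]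
  refine sum_congr rfl fun i _ => ?_
  exact (sum_congr rfl fun u _ => (sum_fiberwise univ P _).symm).trans sum_comm

lemma sum_abs_Abar_sub_blockPairs (hdiag : ∀ u, A u u = 0) (h01 : ∀ u v, A u v = 0 ∨ A u v = 1)
    (i j : Fin k) :
    ∑ p ∈ blockPairs P i j, |Abar A P p.1 p.2 - A p.1 p.2|
      = 2 * ∑ p ∈ blockPairs P i j, A p.1 p.2
        - 2 * (∑ p ∈ blockPairs P i j, A p.1 p.2) ^ 2 / #(blockPairs P i j) := by
  rw [sum_congr rfl fun p hp => by rw [Abar_eq_mean_of_mem_blockPairs P hdiag hp]]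
  exact sum_abs_mean_sub_of_eq_zero_or_eq_one _ _ fun p _ => h01 p.1 p.2

end Blocks

theorem re_closed_form_general {V : Type*} [Fintype V] [DecidableEq V] {k : ℕ}
    (A : V → V → ℝ) (P : V → Fin k)
    (h01 : ∀ u v, A u v = 0 ∨ A u v = 1)
    (hdiag : ∀ u, A u u = 0) :
    RE A P =
      (∑ i : Fin k,
          (4 * eIn A P i - 4 * (eIn A P i) ^ 2 / ((blockCard P i).choose 2 : ℝ)))
        + ∑ i : Fin k, ∑ j ∈ Finset.univ.erase i,
            (2 * eCross A P i j
              - 2 * (eCross A P i j) ^ 2 / ((blockCard P i : ℝ) * (blockCard P j : ℝ))) := by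
  rw [RE_eq_sum_blockPairs P hdiag, ← sum_add_distrib]
  refine sum_congr rfl fun i _ => ?_
  rw [← add_sum_erase _ _ (mem_univ i), sum_abs_Abar_sub_blockPairs P hdiag h01,
    sum_blockPairs_self P hdiag, card_blockPairs_self]
  congr 1
  · ring
  refine sum_congr rfl fun j hj => ?_
  rw [sum_abs_Abar_sub_blockPairs P hdiag h01, sum_blockPairs_eq_eCross P hdiag,
    card_blockPairs_of_ne P (ne_of_mem_erase hj).symm, Nat.cast_mul]

/-- Closed form for the `l₁`-reconstruction error:
`RE(G|S) = Σ_i (4e_i − 4e_i²/C(n_i,2)) + Σ_i Σ_{j≠i} (2e_{ij} − 2e_{ij}²/(n_i n_j))`,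
provided every block containing an internal edge has at least two vertices. -/
theorem re_closed_form {V : Type*} [Fintype V] [DecidableEq V] {k : ℕ}
    (A : V → V → ℝ) (P : V → Fin k)
    (hsym : ∀ u v, A u v = A v u)
    (h01 : ∀ u v, A u v = 0 ∨ A u v = 1)
    (hdiag : ∀ u, A u u = 0)
    (hnd : ∀ i : Fin k, eIn A P i ≠ 0 → 2 ≤ blockCard P i) :
    RE A P =
      (∑ i : Fin k,
          (4 * eIn A P i - 4 * (eIn A P i) ^ 2 / ((blockCard P i).choose 2 : ℝ)))
        + ∑ i : Fin k, ∑ j ∈ Finset.univ.erase i,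
            (2 * eCross A P i j
              - 2 * (eCross A P i j) ^ 2 / ((blockCard P i : ℝ) * (blockCard P j : ℝ))) :=
  re_closed_form_general A P h01 hdiag
end

section
/- For any summary S of a simple graph G determined by a partition of V (with every block containing an internal edge of size ≥ 2), the squared l2-reconstruction error is exactly half the l1-reconstruction error: Σ_{u,v} (Ā(u,v) − A(u,v))² = (1/2) · Σ_{u,v} |Ā(u,v) − A(u,v)|. -/
/-!
Setting: `A : V → V → ℝ` is the (symmetric, 0/1-valued, zero-diagonal) adjacency matrix
of a finite simple undirected graph `G = (V,E)`, and `P : V → Fin k` assigns each vertex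
to its block of the partition `{V_1, …, V_k}`.
-/

open Finset

/-!
Off the diagonal, `Ā` is the average of `A` over the class of `(u, v)` under `pairClass`, which
records the pair of blocks; the diagonal is a class of its own, on which `A` and `Ā` vanish.
Averaging over the classes of a partition is an orthogonal projection, so `∑ Ā = ∑ A` and
`∑ Ā² = ∑ Ā A`. As `A` is 0/1-valued and `Ā ∈ [0, 1]`, pointwise
`(Ā - A)² - |Ā - A| / 2 = (Ā² - Ā A) + (A - Ā) / 2`, and both summands sum to zero.
-/

open scoped BigOperators

section FiberMean

variable {α β K : Type*} [DecidableEq β] [Field K] [CharZero K]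

noncomputable def fiberMean (s : Finset α) (π : α → β) (g : α → K) (x : α) : K :=
  𝔼 y ∈ s with π y = π x, g y

variable (s : Finset α) (π : α → β) (g : α → K)

theorem sum_mul_fiberMean (h : β → K) :
    ∑ x ∈ s, h (π x) * fiberMean s π g x = ∑ x ∈ s, h (π x) * g x := by
  have hπ : ∀ x ∈ s, π x ∈ s.image π := fun x hx => mem_image_of_mem π hx
  rw [← sum_fiberwise_of_maps_to hπ, ← sum_fiberwise_of_maps_to hπ]
  refine sum_congr rfl fun b _ => ?_
  calc ∑ x ∈ s with π x = b, h (π x) * fiberMean s π g x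
      = ∑ x ∈ s with π x = b, h b * 𝔼 y ∈ s with π y = b, g y :=
        sum_congr rfl fun x hx => by rw [fiberMean, (mem_filter.1 hx).2]
    _ = h b * ∑ x ∈ s with π x = b, g x := by
        rw [← mul_sum, sum_const, card_smul_expect]
    _ = ∑ x ∈ s with π x = b, h (π x) * g x := by
        rw [mul_sum]
        exact sum_congr rfl fun x hx => by rw [(mem_filter.1 hx).2]

theorem sum_fiberMean : ∑ x ∈ s, fiberMean s π g x = ∑ x ∈ s, g x := by
  simpa using sum_mul_fiberMean s π g 1

theorem sum_fiberMean_sq :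
    ∑ x ∈ s, fiberMean s π g x ^ 2 = ∑ x ∈ s, fiberMean s π g x * g x := by
  simp only [sq]
  exact sum_mul_fiberMean s π g fun b => 𝔼 y ∈ s with π y = b, g y

end FiberMean

section FiberMeanOrdered

variable {α β K : Type*} [DecidableEq β] [Field K] [LinearOrder K] [IsStrictOrderedRing K]
  {s : Finset α} {π : α → β} {g : α → K}

theorem fiberMean_mem_Icc {x : α} (hx : x ∈ s) (hg : ∀ y ∈ s, g y ∈ Set.Icc 0 1) :
    fiberMean s π g x ∈ Set.Icc 0 1 := by
  have hfiber : ∀ y ∈ s.filter (π · = π x), g y ∈ Set.Icc 0 1 :=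
    fun y hy => hg y (mem_filter.1 hy).1
  exact ⟨expect_nonneg fun y hy => (hfiber y hy).1,
    expect_le ⟨x, mem_filter.2 ⟨hx, rfl⟩⟩ fun y hy => (hfiber y hy).2⟩

theorem sum_sq_sub_fiberMean_eq_half_sum_abs (hg : ∀ x ∈ s, g x = 0 ∨ g x = 1) :
    ∑ x ∈ s, (fiberMean s π g x - g x) ^ 2
      = 1 / 2 * ∑ x ∈ s, |fiberMean s π g x - g x| := by
  set m := fiberMean s π g
  have pointwise : ∀ x ∈ s, (m x - g x) ^ 2
      = (m x ^ 2 - m x * g x) + (g x - m x) / 2 + 1 / 2 * |m x - g x| := by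
    intro x hx
    have hm : m x ∈ Set.Icc 0 1 := fiberMean_mem_Icc hx fun y hy => by
      rcases hg y hy with h | h <;> simp [h]
    rcases hg x hx with h | h <;> rw [h]
    · rw [sub_zero, abs_of_nonneg hm.1]; ring
    · rw [abs_of_nonpos (by linarith [hm.2])]; ring
  rw [sum_congr rfl pointwise, sum_add_distrib, sum_add_distrib, sum_sub_distrib,
    ← sum_div, sum_sub_distrib, sum_fiberMean_sq, sum_fiberMean, ← mul_sum]
  ring

end FiberMeanOrdered

theorem sum_offDiag_eq_sum_sum {α M : Type*} [DecidableEq α] [AddCommMonoid M]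
    {A : α → α → M} (hdiag : ∀ a, A a a = 0) (s : Finset α) :
    ∑ x ∈ s.offDiag, Function.uncurry A x = ∑ a ∈ s, ∑ b ∈ s, A a b := by
  rw [← sum_product', ← diag_union_offDiag, sum_union (disjoint_diag_offDiag s),
    sum_eq_zero (s := s.diag), zero_add]
  · rfl
  · rintro ⟨a, b⟩ hab
    obtain ⟨-, rfl : a = b⟩ := mem_diag.1 hab
    exact hdiag a

section Summary

variable {V : Type*} [DecidableEq V] {k : ℕ}

def pairClass (P : V → Fin k) (x : V × V) : Option (Fin k × Fin k) :=
  if x.1 = x.2 then none else some (P x.1, P x.2)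

variable [Fintype V] (P : V → Fin k)

theorem filter_pairClass_eq_some_self (i : Fin k) :
    univ.filter (pairClass P · = some (i, i)) = (univ.filter (P · = i)).offDiag := by
  ext ⟨u, v⟩
  by_cases h : u = v <;> simp [pairClass, h, and_comm]

theorem filter_pairClass_eq_some_of_ne {i j : Fin k} (hij : i ≠ j) :
    univ.filter (pairClass P · = some (i, j))
      = univ.filter (P · = i) ×ˢ univ.filter (P · = j) := by
  ext ⟨u, v⟩
  by_cases h : u = v
  · subst h
    simpa [pairClass] using fun hi hj => hij (hi.symm.trans hj)
  · simp [pairClass, h, and_comm]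

theorem Abar_eq_fiberMean {A : V → V → ℝ} (hdiag : ∀ u, A u u = 0) (u v : V) :
    Abar A P u v = fiberMean univ (pairClass P) (Function.uncurry A) (u, v) := by
  by_cases huv : u = v
  · subst huv
    refine (if_pos rfl).trans (expect_eq_zero fun y hy => ?_).symm
    have hy_diag : y.1 = y.2 := by simpa [pairClass] using hy
    rw [Function.uncurry_apply_pair, hy_diag, hdiag]
  rw [fiberMean, expect_eq_sum_div_card, pairClass, if_neg huv, Abar, if_neg huv]
  by_cases hP : P u = P v
  -- `C(n, 2) = n (n - 1) / 2` in `ℝ` for every `n`; at `n ≤ 1` both sides are `x / 0 = 0`.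
  · rw [if_pos hP, hP, filter_pairClass_eq_some_self, sum_offDiag_eq_sum_sum hdiag, offDiag_card,
      eIn, Nat.cast_choose_two, div_div_div_cancel_right₀ two_ne_zero,
      Nat.cast_sub (Nat.le_mul_self _), Nat.cast_mul, mul_sub_one]
    rfl
  · rw [if_neg hP, filter_pairClass_eq_some_of_ne P hP, sum_product, card_product, Nat.cast_mul]
    rfl

end Summary

theorem l2_squared_eq_half_l1_general {V : Type*} [Fintype V] [DecidableEq V] {k : ℕ}
    (A : V → V → ℝ) (P : V → Fin k)
    (h01 : ∀ u v, A u v = 0 ∨ A u v = 1)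
    (hdiag : ∀ u, A u u = 0) :
    ∑ u : V, ∑ v : V, (Abar A P u v - A u v) ^ 2
      = (1 / 2) * ∑ u : V, ∑ v : V, |Abar A P u v - A u v| := by
  have h := sum_sq_sub_fiberMean_eq_half_sum_abs (s := univ) (π := pairClass P)
    (g := Function.uncurry A) fun x _ => h01 x.1 x.2
  simpa only [Fintype.sum_prod_type, Function.uncurry_apply_pair, ← Abar_eq_fiberMean P hdiag]
    using h

/-- The squared `l₂`-reconstruction error is exactly half the
`l₁`-reconstruction error:
`Σ_{u,v} (Ā(u,v) − A(u,v))² = (1/2) Σ_{u,v} |Ā(u,v) − A(u,v)|`. -/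
theorem l2_squared_eq_half_l1 {V : Type*} [Fintype V] [DecidableEq V] {k : ℕ}
    (A : V → V → ℝ) (P : V → Fin k)
    (hsym : ∀ u v, A u v = A v u)
    (h01 : ∀ u v, A u v = 0 ∨ A u v = 1)
    (hdiag : ∀ u, A u u = 0)
    (hnd : ∀ i : Fin k, eIn A P i ≠ 0 → 2 ≤ blockCard P i) :
    ∑ u : V, ∑ v : V, (Abar A P u v - A u v) ^ 2
      = (1 / 2) * ∑ u : V, ∑ v : V, |Abar A P u v - A u v| :=
  l2_squared_eq_half_l1_general A P h01 hdiag
end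

section
/- Count-min sketch estimates never underestimate inner products of nonnegative vectors: let A, B : Fin n → ℝ be vectors with nonnegative entries, and let h_1, ..., h_d : Fin n → Fin w be arbitrary functions. For each row j define the estimate E_j = Σ_{b=1}^{w} ( Σ_{i : h_j(i) = b} A_i ) · ( Σ_{i : h_j(i) = b} B_i ). Then min_{1 ≤ j ≤ d} E_j ≥ Σ_{i=1}^{n} A_i·B_i. -/
/-!
Setting: `A B : Fin n → ℝ` are vectors with nonnegative entries and `h j : Fin n → Fin w`
(`j = 1, …, d`, with `d ≥ 1`) are arbitrary hash functions.  The count-min row estimate of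
the inner product `⟨A,B⟩ = Σ_i A_i B_i` for row `j` is
`E_j = Σ_{b ∈ Fin w} (Σ_{i : h j i = b} A_i)·(Σ_{i : h j i = b} B_i)`, and the count-min
sketch estimate is the minimum of the `d` row estimates.
-/

open Finset

/-- The count-min row estimate of `⟨A,B⟩` determined by a hash function `h`. -/
def rowEstimate {n w : ℕ} (A B : Fin n → ℝ) (h : Fin n → Fin w) : ℝ :=
  ∑ b : Fin w,
    (∑ i ∈ Finset.univ.filter (fun i => h i = b), A i) *
    (∑ i ∈ Finset.univ.filter (fun i => h i = b), B i)

lemma sum_mul_self_le {ι : Type*} (s : Finset ι) (f g : ι → ℝ)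
    (hf : ∀ i, 0 ≤ f i) (hg : ∀ i, 0 ≤ g i) :
    ∑ i ∈ s, f i * g i ≤ (∑ i ∈ s, f i) * (∑ i ∈ s, g i) := by
  rw [Finset.sum_mul_sum]
  refine Finset.sum_le_sum fun i hi => ?_
  refine Finset.single_le_sum (f := fun j => f i * g j) (fun j _ => mul_nonneg (hf i) (hg j)) hi

/-- Count-min sketch estimates never underestimate inner products of
nonnegative vectors: `min_{1 ≤ j ≤ d} E_j ≥ Σ_i A_i B_i`. -/
theorem countMin_no_underestimate {n w d : ℕ} (hd : 0 < d)
    (A B : Fin n → ℝ) (hA : ∀ i, 0 ≤ A i) (hB : ∀ i, 0 ≤ B i)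
    (h : Fin d → Fin n → Fin w) :
    ∑ i : Fin n, A i * B i ≤
      Finset.univ.inf' (Finset.univ_nonempty_iff.mpr ⟨⟨0, hd⟩⟩)
        (fun j => rowEstimate A B (h j)) := by
  refine Finset.le_inf' _ _ fun j _ => ?_
  have key : ∑ i : Fin n, A i * B i =
      ∑ b : Fin w, ∑ i ∈ Finset.univ.filter (fun i => h j i = b), A i * B i :=
    (Finset.sum_fiberwise univ (h j) (fun i => A i * B i)).symm
  rw [key, rowEstimate]
  exact Finset.sum_le_sum fun b _ => sum_mul_self_le _ _ _ hA hB
end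

section
/- Let A, B : Fin n → ℝ be vectors with nonnegative entries and let h be a random function from Fin n to Fin w such that for every pair i ≠ i', the probability that h(i) = h(i') is at most 1/w. Then the expected excess of the count-min row estimate over the true inner product satisfies E[ E_h − ⟨A,B⟩ ] = E[ Σ_{i ≠ i'} A_i·B_{i'}·1[h(i)=h(i')] ] ≤ (1/w) · ‖A‖₁·‖B‖₁. -/
/-!
Expanding the product of bucket sums, `E_h` is the sum of `A i * B i'` over all pairs with
`h i = h i'`; the diagonal pairs give `⟨A,B⟩`, so the excess is the sum over colliding pairs
`i ≠ i'`. By linearity of expectation each such pair contributes `A i * B i' * Pr[h i = h i']`,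
which is at most `A i * B i' / w`, and summing over all pairs gives `‖A‖₁ ‖B‖₁ / w`.
-/

open Finset

section Collisions

variable {ι β R : Type*} [Fintype β] [DecidableEq β]

theorem Finset.sum_fiber_mul [NonUnitalNonAssocSemiring R] (s : Finset ι) (h : ι → β)
    (f : ι → R) (g : β → R) :
    ∑ b, (∑ i ∈ s with h i = b, f i) * g b = ∑ i ∈ s, f i * g (h i) := by
  rw [← sum_fiberwise s h (fun i => f i * g (h i))]
  refine sum_congr rfl fun b _ => ?_
  rw [sum_mul]
  exact sum_congr rfl fun i hi => by rw [(mem_filter.mp hi).2]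

theorem Finset.sum_fiber_mul_sum_fiber [NonAssocSemiring R] (s : Finset ι) (h : ι → β)
    (f g : ι → R) :
    ∑ b, (∑ i ∈ s with h i = b, f i) * (∑ j ∈ s with h j = b, g j)
      = ∑ i ∈ s, ∑ j ∈ s, f i * g j * (if h i = h j then 1 else 0) := by
  rw [sum_fiber_mul]
  refine sum_congr rfl fun i _ => ?_
  simp only [mul_sum, sum_filter, mul_ite, mul_one, mul_zero, eq_comm]

variable [Fintype ι] [DecidableEq ι]

theorem sum_mul_sum_collisions (p : (ι → β) → ℝ) (t : ι → Finset ι) (c : ι → ι → ℝ) :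
    ∑ h, p h * ∑ i, ∑ j ∈ t i, c i j * (if h i = h j then 1 else 0)
      = ∑ i, ∑ j ∈ t i, c i j * ∑ h with h i = h j, p h := by
  simp only [mul_sum, sum_filter]
  rw [sum_comm]
  refine sum_congr rfl fun i _ => ?_
  rw [sum_comm]
  refine sum_congr rfl fun j _ => sum_congr rfl fun h _ => ?_
  split_ifs <;> ring

theorem sum_mul_sum_collisions_le (p : (ι → β) → ℝ) {A B : ι → ℝ} (hA : ∀ i, 0 ≤ A i)
    (hB : ∀ i, 0 ≤ B i) {ε : ℝ} (hε : 0 ≤ ε)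
    (hcol : ∀ i j, i ≠ j → ∑ h with h i = h j, p h ≤ ε) :
    ∑ h, p h * ∑ i, ∑ j ∈ univ.erase i, A i * B j * (if h i = h j then 1 else 0)
      ≤ ε * ((∑ i, A i) * (∑ i, B i)) :=
  calc _ = ∑ i, ∑ j ∈ univ.erase i, A i * B j * ∑ h with h i = h j, p h :=
        sum_mul_sum_collisions p _ _
    _ ≤ ∑ i, ∑ j ∈ univ.erase i, A i * B j * ε := by
        gcongr with i _ j hj
        · exact mul_nonneg (hA i) (hB j)
        · exact hcol i j (ne_of_mem_erase hj).symm
    _ ≤ ∑ i, ∑ j, A i * B j * ε := by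
        gcongr with i
        · exact fun j _ _ => mul_nonneg (mul_nonneg (hA i) (hB j)) hε
        · exact erase_subset i univ
    _ = ε * ((∑ i, A i) * (∑ i, B i)) := by
        simp_rw [← sum_mul, ← sum_mul_sum]; ring

end Collisions

theorem rowEstimate_sub_inner {n w : ℕ} (A B : Fin n → ℝ) (h : Fin n → Fin w) :
    rowEstimate A B h - ∑ i, A i * B i
      = ∑ i, ∑ i' ∈ univ.erase i, A i * B i' * (if h i = h i' then 1 else 0) := by
  rw [rowEstimate, sum_fiber_mul_sum_fiber, ← sum_sub_distrib]
  refine sum_congr rfl fun i _ => ?_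
  rw [← add_sum_erase _ _ (mem_univ i)]
  simp

theorem countMin_expected_excess_general {n w : ℕ}
    (A B : Fin n → ℝ) (hA : ∀ i, 0 ≤ A i) (hB : ∀ i, 0 ≤ B i)
    (p : (Fin n → Fin w) → ℝ)
    (hcol : ∀ i i' : Fin n, i ≠ i' →
      ∑ h ∈ Finset.univ.filter (fun h : Fin n → Fin w => h i = h i'), p h ≤ 1 / (w : ℝ)) :
    (∑ h : Fin n → Fin w, p h * (rowEstimate A B h - ∑ i : Fin n, A i * B i)
        = ∑ h : Fin n → Fin w, p h *
            (∑ i : Fin n, ∑ i' ∈ Finset.univ.erase i,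
              A i * B i' * (if h i = h i' then (1 : ℝ) else 0)))
    ∧ (∑ h : Fin n → Fin w, p h *
          (∑ i : Fin n, ∑ i' ∈ Finset.univ.erase i,
            A i * B i' * (if h i = h i' then (1 : ℝ) else 0))
        ≤ (1 / (w : ℝ)) * ((∑ i : Fin n, A i) * (∑ i : Fin n, B i))) :=
  ⟨sum_congr rfl fun h _ => by rw [rowEstimate_sub_inner],
    sum_mul_sum_collisions_le p hA hB (by positivity) hcol⟩

/-- The expected excess of the count-min row estimate over the true inner
product satisfies
`E[E_h − ⟨A,B⟩] = E[Σ_{i ≠ i'} A_i B_{i'} 1[h i = h i']] ≤ (1/w)·‖A‖₁·‖B‖₁`. -/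
theorem countMin_expected_excess {n w : ℕ} (hw : 0 < w)
    (A B : Fin n → ℝ) (hA : ∀ i, 0 ≤ A i) (hB : ∀ i, 0 ≤ B i)
    (p : (Fin n → Fin w) → ℝ)
    (hp0 : ∀ h, 0 ≤ p h) (hp1 : ∑ h : Fin n → Fin w, p h = 1)
    (hcol : ∀ i i' : Fin n, i ≠ i' →
      ∑ h ∈ Finset.univ.filter (fun h : Fin n → Fin w => h i = h i'), p h ≤ 1 / (w : ℝ)) :
    (∑ h : Fin n → Fin w, p h * (rowEstimate A B h - ∑ i : Fin n, A i * B i)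
        = ∑ h : Fin n → Fin w, p h *
            (∑ i : Fin n, ∑ i' ∈ Finset.univ.erase i,
              A i * B i' * (if h i = h i' then (1 : ℝ) else 0)))
    ∧ (∑ h : Fin n → Fin w, p h *
          (∑ i : Fin n, ∑ i' ∈ Finset.univ.erase i,
            A i * B i' * (if h i = h i' then (1 : ℝ) else 0))
        ≤ (1 / (w : ℝ)) * ((∑ i : Fin n, A i) * (∑ i : Fin n, B i))) :=
  countMin_expected_excess_general A B hA hB p hcol
end

section
/- Let A, B : Fin n → ℝ be vectors with nonnegative entries, let ε > 0, and let h be a random function from Fin n to Fin w such that for every pair i ≠ i', the probability that h(i) = h(i') is at most 1/w. Then Pr[ E_h > ⟨A,B⟩ + ε·‖A‖₁·‖B‖₁ ] ≤ 1/(ε·w), where E_h is the count-min row estimate. -/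
/-!
Setting: `A B : Fin n → ℝ` are vectors with nonnegative entries with `‖A‖₁·‖B‖₁ > 0`.
A random hash function `h : Fin n → Fin w` is modeled by a probability mass function `p`
on the finite set of all functions `Fin n → Fin w` (`p ≥ 0`, `Σ_h p h = 1`) such that for
every pair `i ≠ i'` the collision probability `Pr[h i = h i']` is at most `1/w`.  The
count-min row estimate is
`E_h = Σ_{b ∈ Fin w} (Σ_{i : h i = b} A_i)·(Σ_{i : h i = b} B_i)`, and the probability of
an event is the sum of `p h` over the functions `h` in the event.
-/

open Finset

lemma rowEstimate_eq {n w : ℕ} (A B : Fin n → ℝ) (h : Fin n → Fin w) :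
    rowEstimate A B h
      = ∑ i : Fin n, ∑ i' : Fin n, if h i = h i' then A i * B i' else 0 := by
  calc rowEstimate A B h
      = ∑ b : Fin w, ∑ i : Fin n, ∑ i' : Fin n,
          (if h i = b then A i else 0) * (if h i' = b then B i' else 0) := by
        unfold rowEstimate
        simp_rw [Finset.sum_filter, Finset.sum_mul_sum]
    _ = ∑ i : Fin n, ∑ i' : Fin n, ∑ b : Fin w,
          (if h i = b then A i else 0) * (if h i' = b then B i' else 0) := by
        rw [Finset.sum_comm]
        exact Finset.sum_congr rfl fun i _ => Finset.sum_comm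
    _ = ∑ i : Fin n, ∑ i' : Fin n, if h i = h i' then A i * B i' else 0 := by
        refine Finset.sum_congr rfl fun i _ => Finset.sum_congr rfl fun i' _ => ?_
        rw [Finset.sum_eq_single (h i)]
        · rw [if_pos rfl]
          by_cases hc : h i = h i'
          · rw [if_pos hc.symm, if_pos hc]
          · rw [if_neg (fun hh => hc hh.symm), if_neg hc, mul_zero]
        · intro b _ hb
          simp [Ne.symm hb]
        · simp

lemma ip_le_rowEstimate {n w : ℕ} (A B : Fin n → ℝ) (hA : ∀ i, 0 ≤ A i)
    (hB : ∀ i, 0 ≤ B i) (h : Fin n → Fin w) :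
    (∑ i : Fin n, A i * B i) ≤ rowEstimate A B h := by
  rw [rowEstimate_eq]
  refine Finset.sum_le_sum fun i _ => ?_
  have := Finset.single_le_sum
    (f := fun i' => if h i = h i' then A i * B i' else 0)
    (fun i' _ => by
      by_cases hc : h i = h i'
      · simpa [hc] using mul_nonneg (hA i) (hB i')
      · simp [hc]) (Finset.mem_univ i)
  simpa using this

/-- Markov-type tail bound for the count-min row estimate:
`Pr[E_h > ⟨A,B⟩ + ε·‖A‖₁·‖B‖₁] ≤ 1/(ε·w)`. -/
theorem countMin_row_tail_bound {n w : ℕ} (hw : 0 < w)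
    (ε : ℝ) (hε : 0 < ε)
    (A B : Fin n → ℝ) (hA : ∀ i, 0 ≤ A i) (hB : ∀ i, 0 ≤ B i)
    (hL : 0 < (∑ i : Fin n, A i) * (∑ i : Fin n, B i))
    (p : (Fin n → Fin w) → ℝ)
    (hp0 : ∀ h, 0 ≤ p h) (hp1 : ∑ h : Fin n → Fin w, p h = 1)
    (hcol : ∀ i i' : Fin n, i ≠ i' →
      ∑ h ∈ Finset.univ.filter (fun h : Fin n → Fin w => h i = h i'), p h ≤ 1 / (w : ℝ)) :
    ∑ h ∈ Finset.univ.filter (fun h : Fin n → Fin w =>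
        (∑ i : Fin n, A i * B i) + ε * ((∑ i : Fin n, A i) * (∑ i : Fin n, B i))
          < rowEstimate A B h), p h
      ≤ 1 / (ε * (w : ℝ)) := by
  set L : ℝ := (∑ i : Fin n, A i) * (∑ i : Fin n, B i) with hLdef
  set ip : ℝ := ∑ i : Fin n, A i * B i with hip
  have hwp : (0:ℝ) < w := by exact_mod_cast hw
  -- expectation bound
  have hexp : ∑ h : Fin n → Fin w, p h * rowEstimate A B h ≤ ip + L / w := by
    have h1 : ∑ h : Fin n → Fin w, p h * rowEstimate A B h
        = ∑ i : Fin n, ∑ i' : Fin n, ∑ h : Fin n → Fin w,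
            p h * (if h i = h i' then A i * B i' else 0) := by
      simp_rw [rowEstimate_eq, Finset.mul_sum]
      rw [Finset.sum_comm]
      exact Finset.sum_congr rfl fun i _ => Finset.sum_comm
    rw [h1]
    have h2 : ∀ i i' : Fin n, ∑ h : Fin n → Fin w,
        p h * (if h i = h i' then A i * B i' else 0)
        ≤ (if i = i' then A i * B i else 0) + (1 / w) * (A i * B i') := by
      intro i i'
      have h3 : ∑ h : Fin n → Fin w, p h * (if h i = h i' then A i * B i' else 0)
          = (A i * B i') * ∑ h ∈ Finset.univ.filter
              (fun h : Fin n → Fin w => h i = h i'), p h := by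
        rw [Finset.sum_filter, Finset.mul_sum]
        refine Finset.sum_congr rfl fun h _ => ?_
        by_cases hc : h i = h i' <;> simp [hc] <;> ring
      rw [h3]
      by_cases hii : i = i'
      · subst hii
        have : ∑ h ∈ Finset.univ.filter (fun h : Fin n → Fin w => h i = h i), p h = 1 := by
          simpa using hp1
        rw [this, if_pos rfl]
        have hab : 0 ≤ A i * B i := mul_nonneg (hA i) (hB i)
        have h1w : 0 ≤ 1 / (w:ℝ) := by positivity
        nlinarith
      · have hc := hcol i i' hii
        have hAB : 0 ≤ A i * B i' := mul_nonneg (hA i) (hB i')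
        simp only [if_neg hii, zero_add]
        calc (A i * B i') * ∑ h ∈ Finset.univ.filter
              (fun h : Fin n → Fin w => h i = h i'), p h
            ≤ (A i * B i') * (1 / w) := by
              refine mul_le_mul_of_nonneg_left hc hAB
          _ = (1 / w) * (A i * B i') := by ring
    calc ∑ i : Fin n, ∑ i' : Fin n, ∑ h : Fin n → Fin w,
          p h * (if h i = h i' then A i * B i' else 0)
        ≤ ∑ i : Fin n, ∑ i' : Fin n,
            ((if i = i' then A i * B i else 0) + (1 / w) * (A i * B i')) :=
          Finset.sum_le_sum fun i _ => Finset.sum_le_sum fun i' _ => h2 i i'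
      _ = ip + L / w := by
          have e1 : ∀ i : Fin n,
              ∑ i' : Fin n, ((if i = i' then A i * B i else 0) + (1 / w) * (A i * B i'))
              = A i * B i + (1 / w) * (A i * ∑ i' : Fin n, B i') := by
            intro i
            rw [Finset.sum_add_distrib, Finset.sum_ite_eq, if_pos (Finset.mem_univ i)]
            congr 1
            rw [← Finset.mul_sum, ← Finset.mul_sum]
          simp_rw [e1]
          rw [Finset.sum_add_distrib, ← hip]
          congr 1
          rw [← Finset.mul_sum, ← Finset.sum_mul, hLdef]
          ring
  -- Markov
  set S := Finset.univ.filter (fun h : Fin n → Fin w =>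
      ip + ε * L < rowEstimate A B h) with hS
  have hmarkov : (ε * L) * ∑ h ∈ S, p h ≤ L / w := by
    have step1 : (ε * L) * ∑ h ∈ S, p h ≤ ∑ h ∈ S, p h * (rowEstimate A B h - ip) := by
      rw [Finset.mul_sum]
      refine Finset.sum_le_sum fun h hh => ?_
      have hmem : ip + ε * L < rowEstimate A B h := (Finset.mem_filter.mp hh).2
      have := hp0 h
      nlinarith
    have step2 : ∑ h ∈ S, p h * (rowEstimate A B h - ip)
        ≤ ∑ h : Fin n → Fin w, p h * (rowEstimate A B h - ip) := by
      refine Finset.sum_le_sum_of_subset_of_nonneg (Finset.subset_univ S) fun h _ _ => ?_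
      have h1 := ip_le_rowEstimate A B hA hB h
      have := hp0 h
      nlinarith
    have step3 : ∑ h : Fin n → Fin w, p h * (rowEstimate A B h - ip) ≤ L / w := by
      simp_rw [mul_sub]
      rw [Finset.sum_sub_distrib, ← Finset.sum_mul, hp1, one_mul]
      linarith [hexp]
    linarith
  have hP0 : 0 ≤ ∑ h ∈ S, p h := Finset.sum_nonneg fun h _ => hp0 h
  rw [le_div_iff₀ (by positivity)]
  have := mul_le_mul_of_nonneg_right hmarkov (le_of_lt hwp)
  rw [div_mul_cancel₀ _ (ne_of_gt hwp)] at this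
  nlinarith
end
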